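/- arXiv:2303.00695 — 2 statements merged into one kernel-verified Lean document; each statement's English description precedes it below -/
import Mathlib

section
/- Let Γ=(N,E) and add edge e₀={i₀,j₀}. Then both endpoints weakly gain position attachment centrality: PA_{i₀}(N, E∪{e₀}) ≥ PA_{i₀}(N, E) and PA_{j₀}(N, E∪{e₀}) ≥ PA_{j₀}(N, E). -/
open scoped Classical

noncomputable section

variable {V : Type*} [Fintype V] [DecidableEq V]

/-- The vertex set of the connected component of `i` in the graph with edge set `L`. -/
def comp (L : Finset (Sym2 V)) (i : V) : Finset V :=
  Finset.univ.filter fun j =>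
    (SimpleGraph.fromEdgeSet (↑L : Set (Sym2 V))).Reachable i j

/-- Nodes covered by the edge set `L` (the node set `N[L]`). -/
def covered (L : Finset (Sym2 V)) : Finset V :=
  Finset.univ.filter fun i => ∃ e ∈ L, i ∈ e

/-- The collection of (vertex sets of) connected components of the edge-induced
subgraph `Γ_L = (N[L], L)`. -/
def comps (L : Finset (Sym2 V)) : Finset (Finset V) :=
  (covered L).image (comp L)

/-- The link game `w^v` associated with the game `v` and an edge set. -/
def linkGame (v : Finset V → ℝ) (L : Finset (Sym2 V)) : ℝ :=
  ∑ C ∈ comps L, v C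

/-- Shapley value of player `e` in the game `w` with player set `E`. -/
def shapley {α : Type*} [DecidableEq α] (E : Finset α) (w : Finset α → ℝ) (e : α) : ℝ :=
  ∑ L ∈ (E.erase e).powerset,
    ((L.card.factorial : ℝ) * ((E.card - L.card - 1).factorial : ℝ) / (E.card.factorial : ℝ)) *
      (w (insert e L) - w L)

/-- Harsanyi dividend of coalition `L` in the game `w`. -/
def dividend {α : Type*} [DecidableEq α] (w : Finset α → ℝ) (L : Finset α) : ℝ :=
  ∑ T ∈ L.powerset, (-1 : ℝ) ^ (L.card - T.card) * w T

/-- The position value of node `i` in the communication situation `(N, v, E)`. -/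
def positionValue (v : Finset V → ℝ) (E : Finset (Sym2 V)) (i : V) : ℝ :=
  (1 / 2) * ∑ e ∈ E.filter (fun e => i ∈ e), shapley E (linkGame v) e

def Superadditive (v : Finset V → ℝ) : Prop :=
  ∀ S T : Finset V, Disjoint S T → v S + v T ≤ v (S ∪ T)

def ConvexGame (v : Finset V → ℝ) : Prop :=
  ∀ S T : Finset V, v S + v T ≤ v (S ∪ T) + v (S ∩ T)

def ZeroNormalized (v : Finset V → ℝ) : Prop :=
  v ∅ = 0 ∧ ∀ i : V, v {i} = 0

def SymmetricGame (v : Finset V → ℝ) (f : ℕ → ℝ) : Prop :=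
  ∀ S : Finset V, v S = f S.card

/-- An edge set without loops. -/
def SimpleEdges (E : Finset (Sym2 V)) : Prop := ∀ e ∈ E, ¬ e.IsDiag

/-- The edge-induced subgraph `Γ_L = (N[L], L)` is connected. -/
def EdgeConnected (L : Finset (Sym2 V)) : Prop :=
  ∀ i ∈ covered L, ∀ j ∈ covered L,
    (SimpleGraph.fromEdgeSet (↑L : Set (Sym2 V))).Reachable i j

/-- Component of `i` in the subgraph of `Γ_L` induced on the vertex set `S`. -/
def compIn (L : Finset (Sym2 V)) (S : Finset V) (i : V) : Finset V :=
  S.filter fun j =>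
    (SimpleGraph.fromEdgeSet
      (↑(L.filter fun e => ∀ x ∈ e, x ∈ S) : Set (Sym2 V))).Reachable i j

/-- Number of connected components of the subgraph of `Γ_L` induced on `S`. -/
def numCompsIn (L : Finset (Sym2 V)) (S : Finset V) : ℕ :=
  (S.image (compIn L S)).card

/-- A cutvertex of `Γ_L`: a vertex whose removal increases the number of components. -/
def IsCutvertex (L : Finset (Sym2 V)) (i : V) : Prop :=
  i ∈ covered L ∧ numCompsIn L (covered L) < numCompsIn L ((covered L).erase i)

/-- The set of cutedges of `L`: edges both of whose endpoints are cutvertices. -/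
def cutedges (L : Finset (Sym2 V)) : Finset (Sym2 V) :=
  L.filter fun e => ∀ x ∈ e, IsCutvertex L x

/-- The attachment game `v_a(S) = 2(|S| - 1)` (and `v_a(∅) = 0`). -/
def va : Finset V → ℝ := fun S => if S = ∅ then 0 else 2 * ((S.card : ℝ) - 1)

/-- The star on `V` with hub `c`: all (non-loop) edges incident to `c`. -/
def starEdges (c : V) : Finset (Sym2 V) :=
  Finset.univ.filter fun e => ¬ e.IsDiag ∧ c ∈ e

/-- The chain (path) on `Fin n`, with edges `{i, i+1}`. -/
def chainEdges (n : ℕ) : Finset (Sym2 (Fin n)) :=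
  Finset.univ.filter fun e => ∃ i j : Fin n, e = s(i, j) ∧ (j : ℕ) = (i : ℕ) + 1

/-- `F(s, r) = ∑_{k=0}^{r} (-1)^k C(r,k) f(s-k)` for `f : ℕ → ℝ`. -/
def Ffun (f : ℕ → ℝ) (s r : ℕ) : ℝ :=
  ∑ k ∈ Finset.range (r + 1), (-1 : ℝ) ^ k * (r.choose k : ℝ) * f (s - k)

/-- `F(s, r) = ∑_{k=0}^{r} (-1)^k C(r,k) f(s-k)` for `f : ℝ → ℝ`. -/
def FfunR (f : ℝ → ℝ) (s r : ℕ) : ℝ :=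
  ∑ k ∈ Finset.range (r + 1), (-1 : ℝ) ^ k * (r.choose k : ℝ) * f ((s : ℝ) - (k : ℝ))


open SimpleGraph in
/-- Reachability after inserting one edge. -/
lemma reach_insert_iff {V : Type*} [Fintype V] [DecidableEq V]
    (L : Finset (Sym2 V)) {u v : V} (huv : u ≠ v) (a b : V) :
    (fromEdgeSet (↑(insert s(u,v) L) : Set (Sym2 V))).Reachable a b ↔
      (fromEdgeSet (↑L : Set (Sym2 V))).Reachable a b ∨
      ((fromEdgeSet (↑L : Set (Sym2 V))).Reachable a u ∧ (fromEdgeSet (↑L : Set (Sym2 V))).Reachable v b) ∨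
      ((fromEdgeSet (↑L : Set (Sym2 V))).Reachable a v ∧ (fromEdgeSet (↑L : Set (Sym2 V))).Reachable u b) := by
  set G := fromEdgeSet (↑L : Set (Sym2 V)) with hG
  have hmono : G ≤ fromEdgeSet (↑(insert s(u,v) L) : Set (Sym2 V)) := by
    apply SimpleGraph.fromEdgeSet_mono
    intro e he; simp only [Finset.coe_insert, Set.mem_insert_iff]
    exact Or.inr (by simpa using he)
  constructor
  · rintro ⟨w⟩
    induction w with
    | nil => exact Or.inl (Reachable.refl _)
    | @cons x y z h p ih =>
      have hadj : (s(x,y) = s(u,v) ∨ s(x,y) ∈ L) ∧ x ≠ y := by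
        have := (SimpleGraph.fromEdgeSet_adj _).mp h
        simpa using this
      rcases hadj with ⟨h1 | h2, hxy⟩
      · rcases Sym2.eq_iff.mp h1 with ⟨hx, hy⟩ | ⟨hx, hy⟩
        · subst hx; subst hy
          rcases ih with r | ⟨r1, r2⟩ | ⟨r1, r2⟩
          · exact Or.inr (Or.inl ⟨Reachable.refl _, r⟩)
          · exact Or.inr (Or.inl ⟨Reachable.refl _, r2⟩)
          · exact Or.inl r2
        · subst hx; subst hy
          rcases ih with r | ⟨r1, r2⟩ | ⟨r1, r2⟩
          · exact Or.inr (Or.inr ⟨Reachable.refl _, r⟩)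
          · exact Or.inl r2
          · exact Or.inr (Or.inr ⟨Reachable.refl _, r2⟩)
      · have rxy : G.Reachable x y := SimpleGraph.Adj.reachable (by
          rw [hG, SimpleGraph.fromEdgeSet_adj]; exact ⟨by simpa using h2, hxy⟩)
        rcases ih with r | ⟨r1, r2⟩ | ⟨r1, r2⟩
        · exact Or.inl (rxy.trans r)
        · exact Or.inr (Or.inl ⟨rxy.trans r1, r2⟩)
        · exact Or.inr (Or.inr ⟨rxy.trans r1, r2⟩)
  · have hadjuv : (fromEdgeSet (↑(insert s(u,v) L) : Set (Sym2 V))).Adj u v := by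
      rw [SimpleGraph.fromEdgeSet_adj]
      exact ⟨by simp, huv⟩
    rintro (r | ⟨r1, r2⟩ | ⟨r1, r2⟩)
    · exact r.mono hmono
    · exact ((r1.mono hmono).trans hadjuv.reachable).trans (r2.mono hmono)
    · exact ((r1.mono hmono).trans hadjuv.symm.reachable).trans (r2.mono hmono)
namespace PAproof
open SimpleGraph
variable {V : Type*} [Fintype V] [DecidableEq V]

/-- Reachability in the graph with edge set `L`. -/
abbrev R (L : Finset (Sym2 V)) : V → V → Prop := (fromEdgeSet (↑L : Set (Sym2 V))).Reachable

lemma mem_comp_iff {L : Finset (Sym2 V)} {i j : V} :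
    j ∈ comp L i ↔ R L i j := by
  simp [comp]

lemma comp_self (L : Finset (Sym2 V)) (i : V) : i ∈ comp L i :=
  mem_comp_iff.mpr (Reachable.refl _)

lemma comp_eq_iff {L : Finset (Sym2 V)} {i j : V} :
    comp L i = comp L j ↔ R L i j := by
  constructor
  · intro h
    exact mem_comp_iff.mp (h ▸ comp_self L j)
  · intro h
    ext k
    simp only [mem_comp_iff]
    exact ⟨fun hk => (h.symm.trans hk), fun hk => h.trans hk⟩

lemma mem_covered_iff {L : Finset (Sym2 V)} {i : V} :
    i ∈ covered L ↔ ∃ e ∈ L, i ∈ e := by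
  simp [covered]

lemma adj_covered {L : Finset (Sym2 V)} {i j : V}
    (h : (fromEdgeSet (↑L : Set (Sym2 V))).Adj i j) : i ∈ covered L := by
  rw [SimpleGraph.fromEdgeSet_adj] at h
  exact mem_covered_iff.mpr ⟨s(i,j), by simpa using h.1, by simp⟩

lemma reach_covered {L : Finset (Sym2 V)} {i j : V} (h : R L i j) (hne : i ≠ j) :
    i ∈ covered L := by
  obtain ⟨w⟩ := h
  cases w with
  | nil => exact absurd rfl hne
  | cons h p => exact adj_covered h

lemma comp_subset_covered {L : Finset (Sym2 V)} {i : V} (hi : i ∈ covered L) :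
    comp L i ⊆ covered L := by
  intro k hk
  have hr := mem_comp_iff.mp hk
  by_cases hik : i = k
  · exact hik ▸ hi
  · exact reach_covered hr.symm (Ne.symm hik)

lemma mem_comps_iff {L : Finset (Sym2 V)} {C : Finset V} :
    C ∈ comps L ↔ ∃ i ∈ covered L, C = comp L i := by
  simp [comps, eq_comm]

lemma comps_biUnion (L : Finset (Sym2 V)) :
    (comps L).biUnion id = covered L := by
  ext k
  simp only [Finset.mem_biUnion, id]
  constructor
  · rintro ⟨C, hC, hk⟩
    obtain ⟨i, hi, rfl⟩ := mem_comps_iff.mp hC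
    exact comp_subset_covered hi hk
  · intro hk
    exact ⟨comp L k, mem_comps_iff.mpr ⟨k, hk, rfl⟩, comp_self L k⟩

lemma comps_disjoint (L : Finset (Sym2 V)) :
    ∀ C ∈ comps L, ∀ C' ∈ comps L, C ≠ C' → Disjoint C C' := by
  intro C hC C' hC' hne
  obtain ⟨i, hi, rfl⟩ := mem_comps_iff.mp hC
  obtain ⟨j, hj, rfl⟩ := mem_comps_iff.mp hC'
  rw [Finset.disjoint_left]
  intro k hk hk'
  exact hne (comp_eq_iff.mpr ((mem_comp_iff.mp hk).trans (mem_comp_iff.mp hk').symm))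

lemma sum_comps_card (L : Finset (Sym2 V)) :
    ∑ C ∈ comps L, C.card = (covered L).card := by
  rw [← comps_biUnion L]
  exact (Finset.card_biUnion (comps_disjoint L)).symm

lemma comps_nonempty {L : Finset (Sym2 V)} {C : Finset V} (hC : C ∈ comps L) : C ≠ ∅ := by
  obtain ⟨i, hi, rfl⟩ := mem_comps_iff.mp hC
  exact Finset.ne_empty_of_mem (comp_self L i)

lemma linkGame_va_eq (L : Finset (Sym2 V)) :
    linkGame va L = 2 * ((covered L).card : ℝ) - 2 * ((comps L).card : ℝ) := by
  unfold linkGame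
  have h1 : ∀ C ∈ comps L, va C = 2 * (C.card : ℝ) - 2 := by
    intro C hC
    rw [va, if_neg (comps_nonempty hC)]; ring
  rw [Finset.sum_congr rfl h1, Finset.sum_sub_distrib, ← Finset.mul_sum]
  have : ∑ C ∈ comps L, (C.card : ℝ) = ((covered L).card : ℝ) := by
    rw [← sum_comps_card L]; push_cast; ring
  rw [this, Finset.sum_const]
  simp [mul_comm]


lemma covered_insert (L : Finset (Sym2 V)) (u v : V) :
    covered (insert s(u,v) L) = insert u (insert v (covered L)) := by
  ext i
  simp only [mem_covered_iff, Finset.mem_insert, Finset.mem_insert]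
  constructor
  · rintro ⟨e, (rfl | he), hi⟩
    · rcases Sym2.mem_iff.mp hi with rfl | rfl
      · exact Or.inl rfl
      · exact Or.inr (Or.inl rfl)
    · exact Or.inr (Or.inr ⟨e, he, hi⟩)
  · rintro (rfl | rfl | hi)
    · exact ⟨s(i,v), Or.inl rfl, by simp⟩
    · exact ⟨s(u,i), Or.inl rfl, by simp⟩
    · obtain ⟨e, he, hie⟩ := hi
      exact ⟨e, Or.inr he, hie⟩

lemma R_insert_iff {L : Finset (Sym2 V)} {u v : V} (huv : u ≠ v) (a b : V) :
    R (insert s(u,v) L) a b ↔ R L a b ∨ (R L a u ∧ R L v b) ∨ (R L a v ∧ R L u b) :=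
  reach_insert_iff L huv a b

lemma comp_insert_of_not_reach {L : Finset (Sym2 V)} {u v : V} (huv : u ≠ v) {i : V}
    (hiu : ¬ R L i u) (hiv : ¬ R L i v) :
    comp (insert s(u,v) L) i = comp L i := by
  ext k
  rw [mem_comp_iff, mem_comp_iff]
  rw [R_insert_iff huv]
  constructor
  · rintro (h | ⟨h1, h2⟩ | ⟨h1, h2⟩)
    · exact h
    · exact absurd h1 hiu
    · exact absurd h1 hiv
  · exact Or.inl

lemma reach_insert_left {L : Finset (Sym2 V)} {u v : V} (huv : u ≠ v) {i : V}
    (h : R L i u) : R (insert s(u,v) L) i u :=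
  h.mono (SimpleGraph.fromEdgeSet_mono (by simp [Finset.coe_insert, Set.subset_insert]))

lemma adj_insert_uv {L : Finset (Sym2 V)} {u v : V} (huv : u ≠ v) :
    (SimpleGraph.fromEdgeSet (↑(insert s(u,v) L) : Set (Sym2 V))).Adj u v := by
  rw [SimpleGraph.fromEdgeSet_adj]; exact ⟨by simp, huv⟩

lemma reach_insert_right {L : Finset (Sym2 V)} {u v : V} (huv : u ≠ v) {i : V}
    (h : R L i v) : R (insert s(u,v) L) i u :=
  (h.mono (SimpleGraph.fromEdgeSet_mono (by simp [Finset.coe_insert, Set.subset_insert]))).trans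
    (adj_insert_uv (L := L) huv).symm.reachable

lemma comp'u_ne {L : Finset (Sym2 V)} {u v : V} (huv : u ≠ v) (hR : ¬ R L u v)
    {i : V} (hiu : ¬ R L i u) (hiv : ¬ R L i v) :
    comp (insert s(u,v) L) u ≠ comp L i := by
  intro h
  rw [← comp_insert_of_not_reach huv hiu hiv] at h
  have := comp_eq_iff.mp h
  rw [R_insert_iff huv] at this
  rcases this with h' | ⟨h1, h2⟩ | ⟨h1, h2⟩
  · exact hiu h'.symm
  · exact hiv h2.symm
  · exact hR h1
lemma not_covered_not_reach {L : Finset (Sym2 V)} {i j : V} (hj : j ∉ covered L)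
    (hij : i ≠ j) : ¬ R L i j := fun h => hj (reach_covered h.symm (Ne.symm hij))

lemma comps_card_2a {L : Finset (Sym2 V)} {u v : V} (huv : u ≠ v) (hR : ¬ R L u v)
    (hu : u ∈ covered L) (hv : v ∈ covered L) :
    (comps (insert s(u,v) L)).card + 1 = (comps L).card := by
  have hcomps : comps (insert s(u,v) L) =
      insert (comp (insert s(u,v) L) u) (((comps L).erase (comp L u)).erase (comp L v)) := by
    have hcov : covered (insert s(u,v) L) = covered L := by
      rw [covered_insert, Finset.insert_eq_self.mpr hv, Finset.insert_eq_self.mpr hu]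
    ext C
    rw [mem_comps_iff, hcov]
    constructor
    · rintro ⟨i, hi, rfl⟩
      by_cases hiu : R L i u
      · exact Finset.mem_insert.mpr (Or.inl (comp_eq_iff.mpr (reach_insert_left huv hiu)))
      · by_cases hiv : R L i v
        · exact Finset.mem_insert.mpr (Or.inl (comp_eq_iff.mpr (reach_insert_right huv hiv)))
        · refine Finset.mem_insert.mpr (Or.inr ?_)
          rw [comp_insert_of_not_reach huv hiu hiv]
          refine Finset.mem_erase.mpr ⟨?_, Finset.mem_erase.mpr ⟨?_, mem_comps_iff.mpr ⟨i, hi, rfl⟩⟩⟩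
          · intro h; exact hiv (comp_eq_iff.mp h)
          · intro h; exact hiu (comp_eq_iff.mp h)
    · intro hC
      rcases Finset.mem_insert.mp hC with rfl | hC'
      · exact ⟨u, hu, rfl⟩
      · have hC'' := Finset.mem_erase.mp hC'
        have hC3 := Finset.mem_erase.mp hC''.2
        obtain ⟨i, hi, rfl⟩ := mem_comps_iff.mp hC3.2
        have hiu : ¬ R L i u := fun h => hC3.1 (comp_eq_iff.mpr h)
        have hiv : ¬ R L i v := fun h => hC''.1 (comp_eq_iff.mpr h)
        exact ⟨i, hi, (comp_insert_of_not_reach huv hiu hiv).symm⟩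
  have h1 : comp L u ∈ comps L := mem_comps_iff.mpr ⟨u, hu, rfl⟩
  have h2 : comp L v ∈ (comps L).erase (comp L u) :=
    Finset.mem_erase.mpr ⟨fun h => hR ((comp_eq_iff.mp h).symm), mem_comps_iff.mpr ⟨v, hv, rfl⟩⟩
  have h3 : comp (insert s(u,v) L) u ∉ ((comps L).erase (comp L u)).erase (comp L v) := by
    intro h
    have h4 := Finset.mem_erase.mp h
    have h5 := Finset.mem_erase.mp h4.2
    obtain ⟨i, hi, hieq⟩ := mem_comps_iff.mp h5.2
    have hiu : ¬ R L i u := fun hh => h5.1 (hieq ▸ comp_eq_iff.mpr hh)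
    have hiv : ¬ R L i v := fun hh => h4.1 (hieq ▸ comp_eq_iff.mpr hh)
    exact comp'u_ne huv hR hiu hiv (hieq ▸ rfl)
  rw [hcomps, Finset.card_insert_of_notMem h3, Finset.card_erase_of_mem h2,
    Finset.card_erase_of_mem h1]
  have e1 : 1 ≤ (comps L).card := Finset.card_pos.mpr ⟨_, h1⟩
  have e2 : 1 ≤ ((comps L).erase (comp L u)).card := Finset.card_pos.mpr ⟨_, h2⟩
  rw [Finset.card_erase_of_mem h1] at e2
  omega

lemma comps_card_2b {L : Finset (Sym2 V)} {u v : V} (huv : u ≠ v)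
    (hu : u ∈ covered L) (hv : v ∉ covered L) :
    (comps (insert s(u,v) L)).card = (comps L).card := by
  have hR : ¬ R L u v := not_covered_not_reach hv huv
  have hcomps : comps (insert s(u,v) L) =
      insert (comp (insert s(u,v) L) u) ((comps L).erase (comp L u)) := by
    have hcov : covered (insert s(u,v) L) = insert v (covered L) := by
      rw [covered_insert, Finset.insert_eq_self.mpr (Finset.mem_insert_of_mem hu)]
    ext C
    rw [mem_comps_iff, hcov]
    constructor
    · rintro ⟨i, hi, rfl⟩
      rcases Finset.mem_insert.mp hi with rfl | hi'
      · refine Finset.mem_insert.mpr (Or.inl ?_)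
        exact comp_eq_iff.mpr (reach_insert_right (L := L) huv (SimpleGraph.Reachable.refl _))
      · by_cases hiu : R L i u
        · exact Finset.mem_insert.mpr (Or.inl (comp_eq_iff.mpr (reach_insert_left huv hiu)))
        · have hiv : ¬ R L i v := not_covered_not_reach hv (fun h => hv (h ▸ hi'))
          refine Finset.mem_insert.mpr (Or.inr ?_)
          rw [comp_insert_of_not_reach huv hiu hiv]
          exact Finset.mem_erase.mpr
            ⟨fun h => hiu (comp_eq_iff.mp h), mem_comps_iff.mpr ⟨i, hi', rfl⟩⟩
    · intro hC
      rcases Finset.mem_insert.mp hC with rfl | hC'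
      · exact ⟨u, Finset.mem_insert_of_mem hu, rfl⟩
      · have hC'' := Finset.mem_erase.mp hC'
        obtain ⟨i, hi, rfl⟩ := mem_comps_iff.mp hC''.2
        have hiu : ¬ R L i u := fun h => hC''.1 (comp_eq_iff.mpr h)
        have hiv : ¬ R L i v := not_covered_not_reach hv (fun h => hv (h ▸ hi))
        exact ⟨i, Finset.mem_insert_of_mem hi, (comp_insert_of_not_reach huv hiu hiv).symm⟩
  have h1 : comp L u ∈ comps L := mem_comps_iff.mpr ⟨u, hu, rfl⟩
  have h3 : comp (insert s(u,v) L) u ∉ (comps L).erase (comp L u) := by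
    intro h
    have h4 := Finset.mem_erase.mp h
    obtain ⟨i, hi, hieq⟩ := mem_comps_iff.mp h4.2
    have hiu : ¬ R L i u := fun hh => h4.1 (hieq ▸ comp_eq_iff.mpr hh)
    have hiv : ¬ R L i v := not_covered_not_reach hv (fun h => hv (h ▸ hi))
    exact comp'u_ne huv hR hiu hiv (hieq ▸ rfl)
  rw [hcomps, Finset.card_insert_of_notMem h3, Finset.card_erase_of_mem h1]
  have e1 : 1 ≤ (comps L).card := Finset.card_pos.mpr ⟨_, h1⟩
  omega

lemma comps_card_2d {L : Finset (Sym2 V)} {u v : V} (huv : u ≠ v)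
    (hu : u ∉ covered L) (hv : v ∉ covered L) :
    (comps (insert s(u,v) L)).card = (comps L).card + 1 := by
  have hcomps : comps (insert s(u,v) L) = insert (comp (insert s(u,v) L) u) (comps L) := by
    have hcov : covered (insert s(u,v) L) = insert u (insert v (covered L)) := covered_insert L u v
    ext C
    rw [mem_comps_iff, hcov]
    constructor
    · rintro ⟨i, hi, rfl⟩
      rcases Finset.mem_insert.mp hi with rfl | hi'
      · exact Finset.mem_insert_self _ _
      · rcases Finset.mem_insert.mp hi' with rfl | hi''
        · refine Finset.mem_insert.mpr (Or.inl ?_)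
          exact comp_eq_iff.mpr (reach_insert_right (L := L) huv (SimpleGraph.Reachable.refl _))
        · have hiu : ¬ R L i u := not_covered_not_reach hu (fun h => hu (h ▸ hi''))
          have hiv : ¬ R L i v := not_covered_not_reach hv (fun h => hv (h ▸ hi''))
          rw [comp_insert_of_not_reach huv hiu hiv]
          exact Finset.mem_insert.mpr (Or.inr (mem_comps_iff.mpr ⟨i, hi'', rfl⟩))
    · intro hC
      rcases Finset.mem_insert.mp hC with rfl | hC'
      · exact ⟨u, Finset.mem_insert_self _ _, rfl⟩
      · obtain ⟨i, hi, rfl⟩ := mem_comps_iff.mp hC'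
        have hiu : ¬ R L i u := not_covered_not_reach hu (fun h => hu (h ▸ hi))
        have hiv : ¬ R L i v := not_covered_not_reach hv (fun h => hv (h ▸ hi))
        exact ⟨i, Finset.mem_insert_of_mem (Finset.mem_insert_of_mem hi),
          (comp_insert_of_not_reach huv hiu hiv).symm⟩
  have h3 : comp (insert s(u,v) L) u ∉ comps L := by
    intro h
    obtain ⟨i, hi, hieq⟩ := mem_comps_iff.mp h
    have : u ∈ comp L i := hieq ▸ comp_self _ u
    exact hu (comp_subset_covered hi this)
  rw [hcomps, Finset.card_insert_of_notMem h3]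

lemma linkGame_insert_aux (L : Finset (Sym2 V)) {u v : V} (huv : u ≠ v)
    (hpat : v ∈ covered L → u ∈ covered L) :
    linkGame va (insert s(u,v) L) = linkGame va L + (if R L u v then 0 else 2) := by
  by_cases hR : R L u v
  · rw [if_pos hR, add_zero]
    have hu := reach_covered hR huv
    have hv := reach_covered hR.symm (Ne.symm huv)
    have hcov : covered (insert s(u,v) L) = covered L := by
      rw [covered_insert, Finset.insert_eq_self.mpr hv, Finset.insert_eq_self.mpr hu]
    have hcomp : ∀ i, comp (insert s(u,v) L) i = comp L i := by
      intro i; ext k; rw [mem_comp_iff, mem_comp_iff, R_insert_iff huv]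
      constructor
      · rintro (h | ⟨h1, h2⟩ | ⟨h1, h2⟩)
        · exact h
        · exact h1.trans (hR.trans h2)
        · exact h1.trans (hR.symm.trans h2)
      · exact Or.inl
    have hcomps : comps (insert s(u,v) L) = comps L := by
      unfold comps; rw [hcov]; exact Finset.image_congr (fun i _ => hcomp i)
    rw [linkGame_va_eq, linkGame_va_eq, hcomps, hcov]
  · rw [if_neg hR, linkGame_va_eq, linkGame_va_eq]
    by_cases hv : v ∈ covered L
    · have hu := hpat hv
      have hcov : covered (insert s(u,v) L) = covered L := by
        rw [covered_insert, Finset.insert_eq_self.mpr hv, Finset.insert_eq_self.mpr hu]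
      have hc := comps_card_2a huv hR hu hv
      have hc' : ((comps (insert s(u,v) L)).card : ℝ) + 1 = ((comps L).card : ℝ) := by
        exact_mod_cast congrArg (Nat.cast : ℕ → ℝ) hc
      rw [hcov]; linarith
    · by_cases hu : u ∈ covered L
      · have hcov : covered (insert s(u,v) L) = insert v (covered L) := by
          rw [covered_insert, Finset.insert_eq_self.mpr (Finset.mem_insert_of_mem hu)]
        have hc := comps_card_2b huv hu hv
        have hcard : ((covered (insert s(u,v) L)).card : ℝ) = ((covered L).card : ℝ) + 1 := by
          rw [hcov, Finset.card_insert_of_notMem hv]; push_cast; ring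
        rw [hc, hcard]; ring
      · have hcov : covered (insert s(u,v) L) = insert u (insert v (covered L)) :=
          covered_insert L u v
        have hc := comps_card_2d huv hu hv
        have hcard : ((covered (insert s(u,v) L)).card : ℝ) = ((covered L).card : ℝ) + 2 := by
          rw [hcov, Finset.card_insert_of_notMem, Finset.card_insert_of_notMem hv]
          · push_cast; ring
          · simp only [Finset.mem_insert]
            rintro (rfl | h)
            · exact huv rfl
            · exact hu h
        rw [hcard, hc]; push_cast; ring

lemma linkGame_insert (L : Finset (Sym2 V)) {u v : V} (huv : u ≠ v) :
    linkGame va (insert s(u,v) L) = linkGame va L + (if R L u v then 0 else 2) := by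
  by_cases hpat : v ∈ covered L → u ∈ covered L
  · exact linkGame_insert_aux L huv hpat
  · push_neg at hpat
    have h1 : s(u,v) = s(v,u) := Sym2.eq_swap
    have h2 : (R L u v) ↔ (R L v u) := ⟨SimpleGraph.Reachable.symm, SimpleGraph.Reachable.symm⟩
    rw [h1, linkGame_insert_aux L (Ne.symm huv) (fun _ => hpat.1)]
    congr 1
    simp only [h2]
section Perms
variable {α : Type*} [DecidableEq α]

/-- The set of elements occurring strictly before `x` in the list `p`. -/
def beforeF (p : List α) (x : α) : Finset α := (p.takeWhile (fun b => b ≠ x)).toFinset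

lemma beforeF_nil (x : α) : beforeF ([] : List α) x = ∅ := rfl

lemma beforeF_cons (a : α) (p : List α) (x : α) :
    beforeF (a :: p) x = if a = x then ∅ else insert a (beforeF p x) := by
  by_cases h : a = x
  · simp [beforeF, List.takeWhile_cons, h]
  · simp [beforeF, List.takeWhile_cons, h]

lemma beforeF_subset (p : List α) (x : α) : beforeF p x ⊆ p.toFinset := by
  intro b hb
  rw [beforeF, List.mem_toFinset] at hb
  rw [List.mem_toFinset]
  exact (List.takeWhile_sublist _).mem hb

lemma not_mem_beforeF (p : List α) (x : α) : x ∉ beforeF p x := by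
  intro h
  rw [beforeF, List.mem_toFinset] at h
  have := List.mem_takeWhile_imp h
  simp at this

lemma beforeF_total (p : List α) (x y : α) (hx : x ∈ p.toFinset) (hy : y ∈ p.toFinset)
    (hxy : x ≠ y) : x ∈ beforeF p y ∨ y ∈ beforeF p x := by
  induction p with
  | nil => simp at hx
  | cons a q ih =>
    rw [beforeF_cons, beforeF_cons]
    by_cases hay : a = y
    · subst hay
      rw [if_pos rfl]
      right
      rw [if_neg (Ne.symm hxy)]
      exact Finset.mem_insert_self _ _
    · rw [if_neg hay]
      by_cases hax : a = x
      · subst hax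
        exact Or.inl (Finset.mem_insert_self _ _)
      · rw [if_neg hax]
        have hx' : x ∈ q.toFinset := by
          rw [List.toFinset_cons, Finset.mem_insert] at hx
          exact hx.resolve_left (fun h => hax h.symm)
        have hy' : y ∈ q.toFinset := by
          rw [List.toFinset_cons, Finset.mem_insert] at hy
          exact hy.resolve_left (fun h => hay h.symm)
        rcases ih hx' hy' with h | h
        · exact Or.inl (Finset.mem_insert_of_mem h)
        · exact Or.inr (Finset.mem_insert_of_mem h)

lemma beforeF_trans (p : List α) (x y : α) (h : x ∈ beforeF p y) :
    insert x (beforeF p x) ⊆ beforeF p y := by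
  induction p with
  | nil => simp [beforeF_nil] at h
  | cons a q ih =>
    rw [beforeF_cons a q y] at h
    by_cases hay : a = y
    · rw [if_pos hay] at h; simp at h
    · rw [if_neg hay] at h
      rw [beforeF_cons a q x, beforeF_cons a q y, if_neg hay]
      by_cases hax : a = x
      · subst hax
        rw [if_pos rfl]
        intro b hb
        rcases Finset.mem_insert.mp hb with rfl | hb'
        · exact Finset.mem_insert_self _ _
        · simp at hb'
      · rw [if_neg hax]
        have hx' : x ∈ beforeF q y := (Finset.mem_insert.mp h).resolve_left
          (fun hh => hax hh.symm)
        intro b hb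
        rcases Finset.mem_insert.mp hb with rfl | hb'
        · exact Finset.mem_insert_of_mem (ih hx' (Finset.mem_insert_self _ _))
        · rcases Finset.mem_insert.mp hb' with rfl | hb''
          · exact Finset.mem_insert_self _ _
          · exact Finset.mem_insert_of_mem (ih hx' (Finset.mem_insert_of_mem hb''))

/-- All orderings (as lists) of the elements of a finite set. -/
def permsOf : Finset α → Finset (List α)
  | A =>
    if h : A = ∅ then {[]}
    else A.attach.biUnion fun y => (permsOf (A.erase y.1)).image (List.cons y.1)
  termination_by A => A.card
  decreasing_by exact Finset.card_erase_lt_of_mem y.2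

lemma permsOf_spec (A : Finset α) : permsOf A =
    if h : A = ∅ then {[]}
    else A.attach.biUnion fun y => (permsOf (A.erase y.1)).image (List.cons y.1) := by
  rw [permsOf]

lemma permsOf_disj (A : Finset α) :
    Set.PairwiseDisjoint (↑A.attach : Set {x // x ∈ A})
      (fun y => (permsOf (A.erase y.1)).image (List.cons y.1)) := by
  intro y _ y' _ hyy'
  simp only [Function.onFun]
  rw [Finset.disjoint_left]
  intro p hp hp'
  simp only [Finset.mem_image] at hp hp'
  obtain ⟨q, _, rfl⟩ := hp
  obtain ⟨q', _, heq⟩ := hp'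
  exact hyy' (Subtype.ext (by injection heq with h1 _; exact h1.symm))

lemma card_permsOf (A : Finset α) : (permsOf A).card = A.card.factorial := by
  induction A using Finset.strongInductionOn with
  | _ A ih =>
    rw [permsOf_spec]
    by_cases h : A = ∅
    · subst h; simp
    · rw [dif_neg h, Finset.card_biUnion]
      · have : ∀ y ∈ A.attach, ((permsOf (A.erase y.1)).image (List.cons y.1)).card
            = (A.card - 1).factorial := by
          intro y _
          rw [Finset.card_image_of_injective _ (fun a b => by simp),
            ih _ (Finset.erase_ssubset y.2), Finset.card_erase_of_mem y.2]
        rw [Finset.sum_congr rfl this, Finset.sum_const, Finset.card_attach, smul_eq_mul]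
        obtain ⟨n, hn⟩ : ∃ n, A.card = n + 1 :=
          ⟨A.card - 1, (Nat.succ_pred_eq_of_pos (Finset.card_pos.mpr
            (Finset.nonempty_iff_ne_empty.mpr h))).symm⟩
        rw [hn]
        simp [Nat.factorial_succ]
      · intro y hy y' hy' hne
        exact permsOf_disj A (by simp) (by simp) hne

lemma toFinset_of_mem_permsOf {A : Finset α} :
    ∀ p ∈ permsOf A, p.toFinset = A := by
  induction A using Finset.strongInductionOn with
  | _ A ih =>
    intro p hp
    rw [permsOf_spec] at hp
    by_cases h : A = ∅
    · rw [dif_pos h] at hp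
      simp only [Finset.mem_singleton] at hp
      subst hp; simp [h]
    · rw [dif_neg h, Finset.mem_biUnion] at hp
      obtain ⟨y, _, hp⟩ := hp
      rw [Finset.mem_image] at hp
      obtain ⟨q, hq, rfl⟩ := hp
      rw [List.toFinset_cons, ih _ (Finset.erase_ssubset y.2) q hq,
        Finset.insert_erase y.2]

end Perms
section MI
variable {α : Type*} [DecidableEq α]

lemma double_count (B : Finset α) (g : α → Finset α → ℝ) :
    ∑ y ∈ B, ∑ L ∈ (B.erase y).powerset, g y (insert y L) =
      ∑ L ∈ B.powerset, ∑ y ∈ L, g y L := by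
  rw [Finset.sum_sigma', Finset.sum_sigma']
  refine Finset.sum_nbij' (fun p => ⟨insert p.1 p.2, p.1⟩) (fun p => ⟨p.2, p.1.erase p.2⟩)
    ?_ ?_ ?_ ?_ ?_
  · rintro ⟨y, L⟩ h
    simp only [Finset.mem_sigma, Finset.mem_powerset] at h ⊢
    exact ⟨Finset.insert_subset h.1 ((h.2).trans (Finset.erase_subset _ _)),
      Finset.mem_insert_self _ _⟩
  · rintro ⟨L, y⟩ h
    simp only [Finset.mem_sigma, Finset.mem_powerset] at h ⊢
    exact ⟨(Finset.mem_powerset.mp (by exact_mod_cast Finset.mem_powerset.mpr h.1) : L ⊆ B) h.2,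
      Finset.erase_subset_erase _ h.1⟩
  · rintro ⟨y, L⟩ h
    simp only [Finset.mem_sigma, Finset.mem_powerset] at h
    have hyL : y ∉ L := fun hy => (Finset.mem_erase.mp (h.2 hy)).1 rfl
    simp [Finset.erase_insert hyL]
  · rintro ⟨L, y⟩ h
    simp only [Finset.mem_sigma, Finset.mem_powerset] at h
    simp [Finset.insert_erase h.2]
  · rintro ⟨y, L⟩ _
    rfl

lemma perm_sum_eq (A : Finset α) :
    ∀ x ∈ A, ∀ F : Finset α → ℝ,
    ∑ p ∈ permsOf A, F (beforeF p x) =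
      ∑ L ∈ (A.erase x).powerset,
        ((L.card.factorial * (A.card - 1 - L.card).factorial : ℕ) : ℝ) * F L := by
  induction A using Finset.strongInductionOn with
  | _ A ih =>
    intro x hx F
    have hA : A ≠ ∅ := Finset.ne_empty_of_mem hx
    rw [permsOf_spec, dif_neg hA, Finset.sum_biUnion (permsOf_disj A)]
    have h1 : ∀ y ∈ A.attach,
        (∑ p ∈ (permsOf (A.erase y.1)).image (List.cons y.1), F (beforeF p x))
        = ∑ q ∈ permsOf (A.erase y.1), F (beforeF (y.1 :: q) x) := by
      intro y _
      refine Finset.sum_image ?_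
      intro a _ b _ h
      exact List.cons_injective h
    rw [Finset.sum_congr rfl h1,
      Finset.sum_attach A (fun y => ∑ q ∈ permsOf (A.erase y), F (beforeF (y :: q) x))]
    have hsplit := Finset.sum_insert (s := A.erase x)
      (f := fun y => ∑ q ∈ permsOf (A.erase y), F (beforeF (y :: q) x))
      (Finset.notMem_erase x A)
    rw [Finset.insert_erase hx] at hsplit
    rw [hsplit]
    have hxterm : (∑ q ∈ permsOf (A.erase x), F (beforeF (x :: q) x)) =
        ((A.card - 1).factorial : ℝ) * F ∅ := by
      have : ∀ q ∈ permsOf (A.erase x), F (beforeF (x :: q) x) = F ∅ := by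
        intro q _; rw [beforeF_cons, if_pos rfl]
      rw [Finset.sum_congr rfl this, Finset.sum_const, card_permsOf,
        Finset.card_erase_of_mem hx, nsmul_eq_mul]
    set n := A.card with hn
    set B := A.erase x with hB
    have hBcard : B.card = n - 1 := Finset.card_erase_of_mem hx
    have h2 : ∀ y ∈ B, (∑ q ∈ permsOf (A.erase y), F (beforeF (y :: q) x)) =
        ∑ L ∈ (B.erase y).powerset,
          ((((insert y L).card - 1).factorial * (n - 1 - (insert y L).card).factorial : ℕ) : ℝ)
            * F (insert y L) := by
      intro y hy
      obtain ⟨hyx, hyA⟩ := Finset.mem_erase.mp hy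
      have hxy : x ∈ A.erase y := Finset.mem_erase.mpr ⟨fun h => hyx h.symm, hx⟩
      have step1 : ∀ q ∈ permsOf (A.erase y), F (beforeF (y :: q) x)
          = F (insert y (beforeF q x)) := by
        intro q _; rw [beforeF_cons, if_neg hyx]
      rw [Finset.sum_congr rfl step1,
        ih (A.erase y) (Finset.erase_ssubset hyA) x hxy (fun L => F (insert y L))]
      rw [show (A.erase y).erase x = B.erase y from Finset.erase_right_comm]
      refine Finset.sum_congr rfl ?_
      intro L hL
      have hyL : y ∉ L := fun h =>
        (Finset.mem_erase.mp (Finset.mem_powerset.mp hL h)).1 rfl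
      have hci : (insert y L).card = L.card + 1 := Finset.card_insert_of_notMem hyL
      have e1 : (insert y L).card - 1 = L.card := by omega
      have e2 : n - 1 - (insert y L).card = (A.erase y).card - 1 - L.card := by
        rw [hci, Finset.card_erase_of_mem hyA]; omega
      rw [e1, e2]
    rw [Finset.sum_congr rfl h2,
      double_count B (fun y L' =>
        (((L'.card - 1).factorial * (n - 1 - L'.card).factorial : ℕ) : ℝ) * F L')]
    have h3 : ∀ L ∈ B.powerset,
        (∑ y ∈ L, (((L.card - 1).factorial * (n - 1 - L.card).factorial : ℕ) : ℝ) * F L)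
        = (L.card : ℝ) * (((L.card - 1).factorial * (n - 1 - L.card).factorial : ℕ) : ℝ) * F L := by
      intro L _
      rw [Finset.sum_const, nsmul_eq_mul]; ring
    rw [Finset.sum_congr rfl h3]
    have h4 : ∀ L ∈ B.powerset,
        ((L.card.factorial * (n - 1 - L.card).factorial : ℕ) : ℝ) * F L
        = (if L = ∅ then ((n-1).factorial : ℝ) * F ∅ else 0)
          + (L.card : ℝ) * (((L.card - 1).factorial * (n - 1 - L.card).factorial : ℕ) : ℝ) * F L := by
      intro L _
      by_cases hL : L = ∅
      · subst hL; simp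
      · rw [if_neg hL]
        have hpos : 0 < L.card := Finset.card_pos.mpr (Finset.nonempty_iff_ne_empty.mpr hL)
        have : (L.card : ℝ) * ((L.card - 1).factorial : ℝ) = (L.card.factorial : ℝ) := by
          exact_mod_cast congrArg (Nat.cast : ℕ → ℝ) (Nat.mul_factorial_pred hpos.ne')
        push_cast
        rw [zero_add, ← this]
        ring
    rw [Finset.sum_congr rfl h4, Finset.sum_add_distrib, Finset.sum_ite_eq'
      B.powerset ∅ (fun _ => ((n-1).factorial : ℝ) * F ∅)]
    rw [if_pos (Finset.empty_mem_powerset B)]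
    beta_reduce
    rw [hxterm]
end MI
/-- Unnormalized Shapley value. -/
def SH (E : Finset (Sym2 V)) (w : Finset (Sym2 V) → ℝ) (e : Sym2 V) : ℝ :=
  ∑ L ∈ (E.erase e).powerset,
    ((L.card.factorial * (E.card - L.card - 1).factorial : ℕ) : ℝ) * (w (insert e L) - w L)

lemma shapley_eq_SH (E : Finset (Sym2 V)) (w : Finset (Sym2 V) → ℝ) (e : Sym2 V) :
    shapley E w e = SH E w e / (E.card.factorial : ℝ) := by
  unfold shapley SH
  rw [Finset.sum_div]
  refine Finset.sum_congr rfl ?_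
  intro L _
  push_cast
  ring

/-- The loss indicator function. -/
def GfunW (w : Finset (Sym2 V) → ℝ) (e₀ e : Sym2 V) (L : Finset (Sym2 V)) : ℝ :=
  if e₀ ∈ L then (w (insert e (L.erase e₀)) - w (L.erase e₀)) - (w (insert e L) - w L) else 0

lemma coeff_identity {l m : ℕ} (h : l < m) :
    (m+1) * (l.factorial * (m-l-1).factorial) =
      l.factorial * (m-l).factorial + (l+1).factorial * (m-l-1).factorial := by
  obtain ⟨k, hk⟩ : ∃ k, m - l = k + 1 := ⟨m - l - 1, by omega⟩
  have h2 : m - l - 1 = k := by omega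
  have h3 : m + 1 = l + k + 2 := by omega
  rw [h2, hk, h3, Nat.factorial_succ k, Nat.factorial_succ l]
  ring

lemma SH_split (E : Finset (Sym2 V)) (e₀ : Sym2 V) (hnotmem : e₀ ∉ E)
    {e : Sym2 V} (heE : e ∈ E) (w : Finset (Sym2 V) → ℝ) :
    SH (insert e₀ E) w e =
      (∑ L ∈ (E.erase e).powerset,
        ((L.card.factorial * (E.card - L.card).factorial : ℕ) : ℝ) * (w (insert e L) - w L)) +
      ∑ L ∈ (E.erase e).powerset,
        (((L.card + 1).factorial * (E.card - L.card - 1).factorial : ℕ) : ℝ) *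
          (w (insert e (insert e₀ L)) - w (insert e₀ L)) := by
  have he₀e : e₀ ≠ e := fun h => hnotmem (h ▸ heE)
  have hAe : (insert e₀ E).erase e = insert e₀ (E.erase e) := Finset.erase_insert_of_ne he₀e
  have he₀Ee : e₀ ∉ E.erase e := fun h => hnotmem (Finset.mem_of_mem_erase h)
  have hA : (insert e₀ E).card = E.card + 1 := Finset.card_insert_of_notMem hnotmem
  unfold SH
  rw [hAe, Finset.sum_powerset_insert he₀Ee]
  congr 1
  · refine Finset.sum_congr rfl ?_
    intro L _
    have : (insert e₀ E).card - L.card - 1 = E.card - L.card := by omega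
    rw [this]
  · refine Finset.sum_congr rfl ?_
    intro L hL
    have hnL : e₀ ∉ L := fun h => he₀Ee (Finset.mem_powerset.mp hL h)
    have hci : (insert e₀ L).card = L.card + 1 := Finset.card_insert_of_notMem hnL
    have : (insert e₀ E).card - (insert e₀ L).card - 1 = E.card - L.card - 1 := by
      rw [hci]; omega
    rw [this, hci]

lemma SH_diff (E : Finset (Sym2 V)) (e₀ : Sym2 V) (hnotmem : e₀ ∉ E)
    {e : Sym2 V} (heE : e ∈ E) (w : Finset (Sym2 V) → ℝ) :
    ((E.card : ℝ) + 1) * SH E w e - SH (insert e₀ E) w e =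
      ∑ p ∈ permsOf (insert e₀ E), GfunW w e₀ e (beforeF p e) := by
  have he₀e : e₀ ≠ e := fun h => hnotmem (h ▸ heE)
  have heA : e ∈ insert e₀ E := Finset.mem_insert_of_mem heE
  have hAe : (insert e₀ E).erase e = insert e₀ (E.erase e) := Finset.erase_insert_of_ne he₀e
  have he₀Ee : e₀ ∉ E.erase e := fun h => hnotmem (Finset.mem_of_mem_erase h)
  have hA : (insert e₀ E).card = E.card + 1 := Finset.card_insert_of_notMem hnotmem
  have hm : 1 ≤ E.card := Finset.card_pos.mpr ⟨e, heE⟩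
  rw [perm_sum_eq (insert e₀ E) e heA (GfunW w e₀ e), hAe,
    Finset.sum_powerset_insert he₀Ee, SH_split E e₀ hnotmem heE w]
  have hzero : ∀ L ∈ (E.erase e).powerset,
      ((L.card.factorial * ((insert e₀ E).card - 1 - L.card).factorial : ℕ) : ℝ) *
        GfunW w e₀ e L = 0 := by
    intro L hL
    have hnL : e₀ ∉ L := fun h => he₀Ee (Finset.mem_powerset.mp hL h)
    rw [GfunW, if_neg hnL, mul_zero]
  rw [Finset.sum_congr rfl hzero, Finset.sum_const_zero, zero_add]
  unfold SH
  rw [Finset.mul_sum, ← Finset.sum_add_distrib, ← Finset.sum_sub_distrib]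
  refine Finset.sum_congr rfl ?_
  intro L hL
  have hnL : e₀ ∉ L := fun h => he₀Ee (Finset.mem_powerset.mp hL h)
  have hci : (insert e₀ L).card = L.card + 1 := Finset.card_insert_of_notMem hnL
  have hGf : GfunW w e₀ e (insert e₀ L) =
      (w (insert e L) - w L) - (w (insert e (insert e₀ L)) - w (insert e₀ L)) := by
    rw [GfunW, if_pos (Finset.mem_insert_self _ _), Finset.erase_insert hnL]
  have hlm : L.card < E.card := by
    have h1 : L.card ≤ (E.erase e).card := Finset.card_le_card (Finset.mem_powerset.mp hL)
    have h2 : (E.erase e).card = E.card - 1 := Finset.card_erase_of_mem heE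
    omega
  have hw1 : (insert e₀ E).card - 1 - (insert e₀ L).card = E.card - L.card - 1 := by
    rw [hci]; omega
  rw [hGf, hw1, hci]
  have hco := coeff_identity hlm
  have hcoR : ((E.card : ℝ) + 1) * ((L.card.factorial : ℝ) * ((E.card - L.card - 1).factorial : ℝ))
      = (L.card.factorial : ℝ) * ((E.card - L.card).factorial : ℝ)
        + ((L.card + 1).factorial : ℝ) * ((E.card - L.card - 1).factorial : ℝ) := by
    exact_mod_cast congrArg (Nat.cast : ℕ → ℝ) hco
  push_cast
  linear_combination (w (insert e L) - w L) * hcoR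

lemma SH_e₀ (E : Finset (Sym2 V)) (e₀ : Sym2 V) (hnotmem : e₀ ∉ E)
    (w : Finset (Sym2 V) → ℝ) :
    SH (insert e₀ E) w e₀ =
      ∑ p ∈ permsOf (insert e₀ E), (w (insert e₀ (beforeF p e₀)) - w (beforeF p e₀)) := by
  rw [perm_sum_eq (insert e₀ E) e₀ (Finset.mem_insert_self _ _)
    (fun L => w (insert e₀ L) - w L)]
  unfold SH
  rw [Finset.erase_insert hnotmem]
  refine Finset.sum_congr rfl ?_
  intro L _
  have : (insert e₀ E).card - L.card - 1 = (insert e₀ E).card - 1 - L.card := by omega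
  rw [this]
lemma Gpos_extract {i₀ j₀ : V} (hne : i₀ ≠ j₀) {e : Sym2 V} (hnd : ¬ e.IsDiag) (hi : i₀ ∈ e)
    {B : Finset (Sym2 V)} (hpos : 0 < GfunW (linkGame va) s(i₀,j₀) e B) :
    s(i₀,j₀) ∈ B ∧ ∃ v, e = s(i₀,v) ∧ i₀ ≠ v ∧
      R (B.erase s(i₀,j₀)) j₀ v ∧ ¬ R (B.erase s(i₀,j₀)) i₀ v ∧ ¬ R (B.erase s(i₀,j₀)) i₀ j₀ := by
  obtain ⟨v, rfl⟩ := Sym2.mem_iff_exists.mp hi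
  have hiv : i₀ ≠ v := fun h => hnd (by rw [Sym2.mk_isDiag_iff]; exact h)
  by_cases he₀ : s(i₀,j₀) ∈ B
  · rw [GfunW, if_pos he₀] at hpos
    have hd1 : linkGame va (insert s(i₀,v) (B.erase s(i₀,j₀))) - linkGame va (B.erase s(i₀,j₀))
        = if R (B.erase s(i₀,j₀)) i₀ v then 0 else 2 := by
      rw [linkGame_insert _ hiv]; ring
    have hd2 : linkGame va (insert s(i₀,v) B) - linkGame va B
        = if R B i₀ v then 0 else 2 := by
      rw [linkGame_insert _ hiv]; ring
    rw [hd1, hd2] at hpos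
    have hc1 : ¬ R (B.erase s(i₀,j₀)) i₀ v := by
      intro c1; rw [if_pos c1] at hpos
      split_ifs at hpos <;> norm_num at hpos
    have hc2 : R B i₀ v := by
      by_contra c2; rw [if_neg hc1, if_neg c2] at hpos; norm_num at hpos
    have hBM : B = insert s(i₀,j₀) (B.erase s(i₀,j₀)) := (Finset.insert_erase he₀).symm
    rw [hBM, R_insert_iff hne] at hc2
    have hjv : R (B.erase s(i₀,j₀)) j₀ v := by
      rcases hc2 with h | ⟨h1, h2⟩ | ⟨h1, h2⟩
      · exact absurd h hc1
      · exact h2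
      · exact absurd h2 hc1
    have hij : ¬ R (B.erase s(i₀,j₀)) i₀ j₀ := fun h => hc1 (h.trans hjv)
    exact ⟨he₀, v, rfl, hiv, hjv, hc1, hij⟩
  · rw [GfunW, if_neg he₀] at hpos
    norm_num at hpos

lemma GfunW_le_two {i₀ v : V} (hiv : i₀ ≠ v) (e₀ : Sym2 V) (L : Finset (Sym2 V)) :
    GfunW (linkGame va) e₀ s(i₀,v) L ≤ 2 := by
  rw [GfunW]
  split_ifs with h
  · have hd1 : linkGame va (insert s(i₀,v) (L.erase e₀)) - linkGame va (L.erase e₀)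
        = if R (L.erase e₀) i₀ v then 0 else 2 := by rw [linkGame_insert _ hiv]; ring
    have hd2 : linkGame va (insert s(i₀,v) L) - linkGame va L
        = if R L i₀ v then 0 else 2 := by rw [linkGame_insert _ hiv]; ring
    rw [hd1, hd2]
    split_ifs <;> norm_num
  · norm_num

lemma perm_ineq (E : Finset (Sym2 V)) (hE : SimpleEdges E) {i₀ j₀ : V} (hne : i₀ ≠ j₀)
    (hnotmem : s(i₀,j₀) ∉ E) {p : List (Sym2 V)} (hp : p ∈ permsOf (insert s(i₀,j₀) E)) :
    ∑ e ∈ E.filter (fun e => i₀ ∈ e), GfunW (linkGame va) s(i₀,j₀) e (beforeF p e) ≤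
      linkGame va (insert s(i₀,j₀) (beforeF p s(i₀,j₀))) - linkGame va (beforeF p s(i₀,j₀)) := by
  have hRHS : linkGame va (insert s(i₀,j₀) (beforeF p s(i₀,j₀)))
      - linkGame va (beforeF p s(i₀,j₀))
      = if R (beforeF p s(i₀,j₀)) i₀ j₀ then 0 else 2 := by
    rw [linkGame_insert _ hne]; ring
  have hptoF := toFinset_of_mem_permsOf p hp
  by_cases hbad : ∃ e ∈ E.filter (fun e => i₀ ∈ e),
      0 < GfunW (linkGame va) s(i₀,j₀) e (beforeF p e)
  · obtain ⟨e₁, he₁S, hpos₁⟩ := hbad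
    have he₁E : e₁ ∈ E := (Finset.mem_filter.mp he₁S).1
    have hi₁ : i₀ ∈ e₁ := (Finset.mem_filter.mp he₁S).2
    obtain ⟨he₀B₁, v₁, he₁eq, hiv₁, hjv₁, hcv₁, hij₁⟩ :=
      Gpos_extract hne (hE e₁ he₁E) hi₁ hpos₁
    have hkey : ∀ (ea eb : Sym2 V) (vA : V), ea = s(i₀,vA) → i₀ ≠ vA → ea ∈ E →
        ea ∈ beforeF p eb →
        R ((beforeF p ea).erase s(i₀,j₀)) j₀ vA →
        ¬ R ((beforeF p eb).erase s(i₀,j₀)) i₀ j₀ → False := by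
      intro ea eb vA haeq hnva haE hab hjva hijb
      have hsub : insert ea (beforeF p ea) ⊆ beforeF p eb := beforeF_trans p ea eb hab
      have hMsub : (beforeF p ea).erase s(i₀,j₀) ⊆ (beforeF p eb).erase s(i₀,j₀) :=
        Finset.erase_subset_erase _ (fun b hb => hsub (Finset.mem_insert_of_mem hb))
      have haM : ea ∈ (beforeF p eb).erase s(i₀,j₀) :=
        Finset.mem_erase.mpr ⟨fun h => hnotmem (h ▸ haE), hsub (Finset.mem_insert_self _ _)⟩
      have hadj : (SimpleGraph.fromEdgeSet
          (↑((beforeF p eb).erase s(i₀,j₀)) : Set (Sym2 V))).Adj i₀ vA := by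
        rw [SimpleGraph.fromEdgeSet_adj]
        refine ⟨?_, hnva⟩
        rw [← haeq]
        exact Finset.mem_coe.mpr haM
      have hjb : R ((beforeF p eb).erase s(i₀,j₀)) j₀ vA :=
        hjva.mono (SimpleGraph.fromEdgeSet_mono (Finset.coe_subset.mpr hMsub))
      exact hijb (hadj.reachable.trans hjb.symm)
    have hnR₀ : ¬ R (beforeF p s(i₀,j₀)) i₀ j₀ := by
      intro h
      have hB₀sub : beforeF p s(i₀,j₀) ⊆ (beforeF p e₁).erase s(i₀,j₀) := by
        intro b hb
        have h1 : insert s(i₀,j₀) (beforeF p s(i₀,j₀)) ⊆ beforeF p e₁ :=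
          beforeF_trans p s(i₀,j₀) e₁ he₀B₁
        refine Finset.mem_erase.mpr ⟨?_, h1 (Finset.mem_insert_of_mem hb)⟩
        rintro rfl; exact not_mem_beforeF p s(i₀,j₀) hb
      exact hij₁ (h.mono (SimpleGraph.fromEdgeSet_mono (Finset.coe_subset.mpr hB₀sub)))
    rw [hRHS, if_neg hnR₀]
    have hother : ∀ e ∈ (E.filter (fun e => i₀ ∈ e)).erase e₁,
        GfunW (linkGame va) s(i₀,j₀) e (beforeF p e) ≤ 0 := by
      intro e he
      by_contra hgt
      push_neg at hgt
      have heE : e ∈ E := (Finset.mem_filter.mp (Finset.mem_erase.mp he).2).1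
      have hie : i₀ ∈ e := (Finset.mem_filter.mp (Finset.mem_erase.mp he).2).2
      obtain ⟨he₀B₂, v₂, he₂eq, hiv₂, hjv₂, hcv₂, hij₂⟩ :=
        Gpos_extract hne (hE e heE) hie hgt
      have hne₁₂ : e₁ ≠ e := (Finset.mem_erase.mp he).1.symm
      have he₁A : e₁ ∈ p.toFinset := by
        rw [hptoF]; exact Finset.mem_insert_of_mem he₁E
      have heA : e ∈ p.toFinset := by
        rw [hptoF]; exact Finset.mem_insert_of_mem heE
      rcases beforeF_total p e₁ e he₁A heA hne₁₂ with hlt | hlt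
      · exact hkey e₁ e v₁ he₁eq hiv₁ he₁E hlt hjv₁ hij₂
      · exact hkey e e₁ v₂ he₂eq hiv₂ heE hlt hjv₂ hij₁
    have hbound : GfunW (linkGame va) s(i₀,j₀) e₁ (beforeF p e₁) ≤ 2 := by
      rw [he₁eq]
      exact GfunW_le_two hiv₁ _ _
    calc ∑ e ∈ E.filter (fun e => i₀ ∈ e), GfunW (linkGame va) s(i₀,j₀) e (beforeF p e)
        = GfunW (linkGame va) s(i₀,j₀) e₁ (beforeF p e₁) +
          ∑ e ∈ (E.filter (fun e => i₀ ∈ e)).erase e₁,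
            GfunW (linkGame va) s(i₀,j₀) e (beforeF p e) :=
          (Finset.add_sum_erase _ _ he₁S).symm
      _ ≤ 2 + 0 := add_le_add hbound (Finset.sum_nonpos hother)
      _ = 2 := by norm_num
  · push_neg at hbad
    have h0 : ∑ e ∈ E.filter (fun e => i₀ ∈ e),
        GfunW (linkGame va) s(i₀,j₀) e (beforeF p e) ≤ 0 := Finset.sum_nonpos hbad
    have hR0 : (0:ℝ) ≤ if R (beforeF p s(i₀,j₀)) i₀ j₀ then 0 else 2 := by
      split_ifs <;> norm_num
    rw [hRHS]
    linarith

lemma PA_gain_one (E : Finset (Sym2 V)) (hE : SimpleEdges E) {i₀ j₀ : V} (hne : i₀ ≠ j₀)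
    (hnotmem : s(i₀,j₀) ∉ E) :
    positionValue va E i₀ ≤ positionValue va (insert s(i₀,j₀) E) i₀ := by
  have hfilter : (insert s(i₀,j₀) E).filter (fun e => i₀ ∈ e)
      = insert s(i₀,j₀) (E.filter (fun e => i₀ ∈ e)) := by
    rw [Finset.filter_insert, if_pos (by simp)]
  have he₀S : s(i₀,j₀) ∉ E.filter (fun e => i₀ ∈ e) :=
    fun h => hnotmem (Finset.mem_filter.mp h).1
  have hAcard : (insert s(i₀,j₀) E).card = E.card + 1 :=
    Finset.card_insert_of_notMem hnotmem
  have hmf : (0:ℝ) < (E.card.factorial : ℝ) := by exact_mod_cast E.card.factorial_pos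
  have hnf : (0:ℝ) < ((insert s(i₀,j₀) E).card.factorial : ℝ) := by
    exact_mod_cast (insert s(i₀,j₀) E).card.factorial_pos
  have hfact : (((insert s(i₀,j₀) E).card.factorial : ℕ) : ℝ)
      = ((E.card : ℝ) + 1) * (E.card.factorial : ℝ) := by
    rw [hAcard, Nat.factorial_succ]; push_cast; ring
  have hmain : ((E.card : ℝ) + 1) * (∑ e ∈ E.filter (fun e => i₀ ∈ e), SH E (linkGame va) e)
      - ∑ e ∈ E.filter (fun e => i₀ ∈ e), SH (insert s(i₀,j₀) E) (linkGame va) e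
      ≤ SH (insert s(i₀,j₀) E) (linkGame va) s(i₀,j₀) := by
    have step1 : ∀ e ∈ E.filter (fun e => i₀ ∈ e),
        ((E.card : ℝ) + 1) * SH E (linkGame va) e - SH (insert s(i₀,j₀) E) (linkGame va) e
        = ∑ p ∈ permsOf (insert s(i₀,j₀) E), GfunW (linkGame va) s(i₀,j₀) e (beforeF p e) := by
      intro e he
      exact SH_diff E s(i₀,j₀) hnotmem (Finset.mem_filter.mp he).1 (linkGame va)
    have step2 : ∑ e ∈ E.filter (fun e => i₀ ∈ e),
        (((E.card : ℝ) + 1) * SH E (linkGame va) e - SH (insert s(i₀,j₀) E) (linkGame va) e)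
        ≤ SH (insert s(i₀,j₀) E) (linkGame va) s(i₀,j₀) := by
      rw [Finset.sum_congr rfl step1, Finset.sum_comm, SH_e₀ E s(i₀,j₀) hnotmem (linkGame va)]
      refine Finset.sum_le_sum ?_
      intro p hp
      exact perm_ineq E hE hne hnotmem hp
    rw [Finset.sum_sub_distrib, ← Finset.mul_sum] at step2
    exact step2
  have T : ∑ e ∈ E.filter (fun e => i₀ ∈ e), shapley E (linkGame va) e ≤
      shapley (insert s(i₀,j₀) E) (linkGame va) s(i₀,j₀) +
      ∑ e ∈ E.filter (fun e => i₀ ∈ e), shapley (insert s(i₀,j₀) E) (linkGame va) e := by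
    simp only [shapley_eq_SH]
    rw [← Finset.sum_div, ← Finset.sum_div, ← add_div, div_le_div_iff₀ hmf hnf]
    rw [hfact]
    have h1 : (((E.card : ℝ) + 1) * (∑ e ∈ E.filter (fun e => i₀ ∈ e), SH E (linkGame va) e))
        * (E.card.factorial : ℝ)
        ≤ (SH (insert s(i₀,j₀) E) (linkGame va) s(i₀,j₀) +
            ∑ e ∈ E.filter (fun e => i₀ ∈ e), SH (insert s(i₀,j₀) E) (linkGame va) e)
          * (E.card.factorial : ℝ) := by
      apply mul_le_mul_of_nonneg_right _ (le_of_lt hmf)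
      linarith
    nlinarith [h1]
  rw [positionValue, positionValue, hfilter, Finset.sum_insert he₀S]
  linarith

end PAproof

/-- both endpoints of an added edge weakly gain position attachment
centrality. -/
theorem PA_endpoints_gain (E : Finset (Sym2 V)) (hE : SimpleEdges E)
    (i₀ j₀ : V) (hne : i₀ ≠ j₀) (hnotmem : s(i₀, j₀) ∉ E) :
    positionValue va E i₀ ≤ positionValue va (insert s(i₀, j₀) E) i₀ ∧
      positionValue va E j₀ ≤ positionValue va (insert s(i₀, j₀) E) j₀ := by
  constructor
  · exact PAproof.PA_gain_one E hE hne hnotmem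
  · have hswap : s(i₀,j₀) = s(j₀,i₀) := Sym2.eq_swap
    rw [hswap]
    exact PAproof.PA_gain_one E hE (Ne.symm hne) (by rw [← hswap]; exact hnotmem)

end
end

section
/- On trees the position attachment centrality equals the degree: if Γ=(N,E) is a cycle-free graph (forest), then PA_i(Γ) = d_i for every node i, where d_i is the degree of i in Γ. -/
open scoped Classical

noncomputable section

variable {V : Type*} [Fintype V] [DecidableEq V]

/-! ### Auxiliary lemmas -/

lemma mem_comp_iff {L : Finset (Sym2 V)} {i j : V} :
    j ∈ comp L i ↔ (SimpleGraph.fromEdgeSet (↑L : Set (Sym2 V))).Reachable i j := by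
  simp [comp]

lemma mem_covered_iff {L : Finset (Sym2 V)} {i : V} :
    i ∈ covered L ↔ ∃ e ∈ L, i ∈ e := by
  simp [covered]

lemma adj_covered {L : Finset (Sym2 V)} {i j : V}
    (h : (SimpleGraph.fromEdgeSet (↑L : Set (Sym2 V))).Adj i j) : i ∈ covered L := by
  rw [SimpleGraph.fromEdgeSet_adj] at h
  exact mem_covered_iff.2 ⟨s(i, j), by exact_mod_cast h.1, by simp⟩

lemma reach_covered {L : Finset (Sym2 V)} {i j : V}
    (h : (SimpleGraph.fromEdgeSet (↑L : Set (Sym2 V))).Reachable i j) :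
    j = i ∨ (i ∈ covered L ∧ j ∈ covered L) := by
  obtain ⟨w⟩ := h
  induction w with
  | nil => exact Or.inl rfl
  | cons h p ih =>
    refine Or.inr ⟨adj_covered h, ?_⟩
    rcases ih with rfl | ⟨_, hj⟩
    · exact adj_covered h.symm
    · exact hj

lemma comp_self (L : Finset (Sym2 V)) (i : V) : i ∈ comp L i :=
  mem_comp_iff.2 (SimpleGraph.Reachable.refl i)

lemma comp_subset_covered {L : Finset (Sym2 V)} {i : V} (hi : i ∈ covered L) :
    comp L i ⊆ covered L := by
  intro j hj
  rcases reach_covered (mem_comp_iff.1 hj) with rfl | ⟨_, h⟩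
  · exact hi
  · exact h

lemma comp_eq_of_reach {L : Finset (Sym2 V)} {i j : V}
    (h : (SimpleGraph.fromEdgeSet (↑L : Set (Sym2 V))).Reachable i j) :
    comp L j = comp L i := by
  ext k
  simp only [mem_comp_iff]
  exact ⟨fun h' => h.trans h', fun h' => h.symm.trans h'⟩

lemma uncovered_comp {L : Finset (Sym2 V)} {i : V} (hi : i ∉ covered L) :
    comp L i = {i} := by
  ext j
  simp only [mem_comp_iff, Finset.mem_singleton]
  constructor
  · intro h
    rcases reach_covered h with rfl | ⟨h1, _⟩
    · rfl
    · exact absurd h1 hi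
  · rintro rfl
    exact SimpleGraph.Reachable.refl _

/-- Sum of the component weights over a set on which the component map is constant. -/
lemma sum_two_sub_const {C : Finset V} (hC : C.Nonempty) (g : V → Finset V)
    (hg : ∀ i ∈ C, g i = C) :
    ∑ i ∈ C, ((2 : ℝ) - 2 / ((g i).card : ℝ)) = 2 * (C.card : ℝ) - 2 := by
  rw [Finset.sum_congr rfl (fun i hi => by rw [hg i hi]), Finset.sum_const, nsmul_eq_mul]
  have h0 : (0 : ℝ) < (C.card : ℝ) := by exact_mod_cast hC.card_pos
  field_simp

/-- The link game of the attachment game, as a sum over covered vertices. -/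
lemma linkGame_va_eq (L : Finset (Sym2 V)) :
    linkGame va L = ∑ i ∈ covered L, ((2 : ℝ) - 2 / ((comp L i).card : ℝ)) := by
  unfold linkGame comps
  refine Finset.sum_image' _ (fun i hi => ?_)
  have hfil : ((covered L).filter fun j => comp L j = comp L i) = comp L i := by
    ext j
    simp only [Finset.mem_filter]
    constructor
    · rintro ⟨hj, hc⟩
      rw [← hc]
      exact comp_self L j
    · intro hj
      exact ⟨comp_subset_covered hi hj, comp_eq_of_reach (mem_comp_iff.1 hj)⟩
  rw [hfil]
  rw [sum_two_sub_const ⟨i, comp_self L i⟩ (comp L)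
    (fun j hj => comp_eq_of_reach (mem_comp_iff.1 hj))]
  have hne : comp L i ≠ ∅ := Finset.ne_empty_of_mem (comp_self L i)
  simp only [va, if_neg hne]
  ring

/-- Reachability in a graph with one extra edge. -/
lemma reach_sup {G : SimpleGraph V} {a b x y : V}
    (h : (G ⊔ SimpleGraph.fromEdgeSet {s(a, b)}).Reachable x y) :
    G.Reachable x y ∨ (G.Reachable x a ∧ G.Reachable b y) ∨
      (G.Reachable x b ∧ G.Reachable a y) := by
  obtain ⟨w⟩ := h
  induction w with
  | nil => exact Or.inl (SimpleGraph.Reachable.refl _)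
  | cons h p ih =>
    rcases (SimpleGraph.sup_adj _ _ _ _).1 h with h' | h'
    · have r := h'.reachable
      rcases ih with h1 | ⟨h1, h2⟩ | ⟨h1, h2⟩
      · exact Or.inl (r.trans h1)
      · exact Or.inr (Or.inl ⟨r.trans h1, h2⟩)
      · exact Or.inr (Or.inr ⟨r.trans h1, h2⟩)
    · rw [SimpleGraph.fromEdgeSet_adj, Set.mem_singleton_iff, Sym2.eq_iff] at h'
      rcases h'.1 with ⟨rfl, rfl⟩ | ⟨rfl, rfl⟩
      · rcases ih with h1 | ⟨h1, h2⟩ | ⟨h1, h2⟩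
        · exact Or.inr (Or.inl ⟨SimpleGraph.Reachable.refl _, h1⟩)
        · exact Or.inr (Or.inl ⟨SimpleGraph.Reachable.refl _, h2⟩)
        · exact Or.inl h2
      · rcases ih with h1 | ⟨h1, h2⟩ | ⟨h1, h2⟩
        · exact Or.inr (Or.inr ⟨SimpleGraph.Reachable.refl _, h1⟩)
        · exact Or.inl h2
        · exact Or.inr (Or.inr ⟨SimpleGraph.Reachable.refl _, h2⟩)

/-- Main counting lemma: on a forest, the attachment link game is twice the number of edges. -/
lemma linkGame_va_forest {E : Finset (Sym2 V)} (hE : SimpleEdges E)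
    (hacyc : (SimpleGraph.fromEdgeSet (↑E : Set (Sym2 V))).IsAcyclic) :
    ∀ L : Finset (Sym2 V), L ⊆ E → linkGame va L = 2 * (L.card : ℝ) := by
  intro L
  induction L using Finset.induction_on with
  | empty =>
    intro _
    rw [linkGame_va_eq]
    simp [covered]
  | @insert e L he ih =>
    revert he
    induction e using Sym2.inductionOn with
    | hf a b =>
    intro he hsub
    have heE : s(a, b) ∈ E := hsub (Finset.mem_insert_self _ _)
    have hLE : L ⊆ E := fun x hx => hsub (Finset.mem_insert_of_mem hx)
    have hab : a ≠ b := by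
      intro h
      exact hE _ heE (by simp [h])
    set G := SimpleGraph.fromEdgeSet (↑L : Set (Sym2 V)) with hG
    set L' : Finset (Sym2 V) := insert s(a, b) L with hL'
    set G' := SimpleGraph.fromEdgeSet (↑L' : Set (Sym2 V)) with hG'
    have hG'eq : G' = G ⊔ SimpleGraph.fromEdgeSet {s(a, b)} := by
      rw [hG', hL', Finset.coe_insert, Set.insert_eq, SimpleGraph.fromEdgeSet_union, sup_comm]
    -- the new edge is a bridge, so its endpoints are not reachable in `G`
    have hle : G' ≤ SimpleGraph.fromEdgeSet (↑E : Set (Sym2 V)) :=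
      SimpleGraph.fromEdgeSet_mono (by exact_mod_cast hsub)
    have hacyc' : G'.IsAcyclic := fun v c hc =>
      hacyc (c.mapLe hle) (SimpleGraph.Walk.IsCycle.mapLe hle hc)
    have hadj' : G'.Adj a b := by
      rw [hG', SimpleGraph.fromEdgeSet_adj]
      exact ⟨by simp [hL'], hab⟩
    have hbridge : G'.IsBridge s(a, b) :=
      SimpleGraph.isAcyclic_iff_forall_adj_isBridge.1 hacyc' hadj'
    have hGdel : G ≤ G' \ SimpleGraph.fromEdgeSet {s(a, b)} := by
      intro x y hxy
      rw [hG, SimpleGraph.fromEdgeSet_adj] at hxy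
      constructor
      · rw [hG', SimpleGraph.fromEdgeSet_adj]
        exact ⟨by rw [hL', Finset.coe_insert]; exact Set.mem_insert_of_mem _ hxy.1, hxy.2⟩
      · rw [SimpleGraph.fromEdgeSet_adj]
        rintro ⟨hmem, -⟩
        rw [Set.mem_singleton_iff] at hmem
        exact he (by rw [← hmem]; exact_mod_cast hxy.1)
    have hnr : ¬ G.Reachable a b := fun h =>
      (SimpleGraph.isBridge_iff.1 hbridge) (h.mono hGdel)
    -- reachability in `G'`
    have hreach' : ∀ i j : V, G'.Reachable i j ↔
        (G.Reachable i j ∨ (G.Reachable i a ∧ G.Reachable b j) ∨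
          (G.Reachable i b ∧ G.Reachable a j)) := by
      intro i j
      rw [hG'eq]
      constructor
      · exact reach_sup
      · have hGle : G ≤ G ⊔ SimpleGraph.fromEdgeSet {s(a, b)} := le_sup_left
        have hab' : (G ⊔ SimpleGraph.fromEdgeSet {s(a, b)}).Adj a b := by
          refine Or.inr ?_
          rw [SimpleGraph.fromEdgeSet_adj]
          exact ⟨rfl, hab⟩
        rintro (h | ⟨h1, h2⟩ | ⟨h1, h2⟩)
        · exact h.mono hGle
        · exact ((h1.mono hGle).trans hab'.reachable).trans (h2.mono hGle)
        · exact ((h1.mono hGle).trans hab'.symm.reachable).trans (h2.mono hGle)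
    set Ca := comp L a with hCa
    set Cb := comp L b with hCb
    set U : Finset V := Ca ∪ Cb with hU
    have hmemCa : ∀ j, j ∈ Ca ↔ G.Reachable a j := fun j => mem_comp_iff
    have hmemCb : ∀ j, j ∈ Cb ↔ G.Reachable b j := fun j => mem_comp_iff
    have hdisj : Disjoint Ca Cb := by
      rw [Finset.disjoint_left]
      intro j hja hjb
      exact hnr (((hmemCa j).1 hja).trans ((hmemCb j).1 hjb).symm)
    -- components in the new graph
    have hcompU : ∀ i ∈ U, comp L' i = U := by
      intro i hi
      ext j
      simp only [mem_comp_iff, hU, Finset.mem_union, hmemCa, hmemCb, ← hG', hreach']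
      rcases Finset.mem_union.1 hi with hia | hib
      · have hai : G.Reachable a i := (hmemCa i).1 hia
        constructor
        · rintro (h | ⟨h1, h2⟩ | ⟨h1, h2⟩)
          · exact Or.inl (hai.trans h)
          · exact Or.inr h2
          · exact absurd (hai.trans h1) hnr
        · rintro (hj | hj)
          · exact Or.inl (hai.symm.trans hj)
          · exact Or.inr (Or.inl ⟨hai.symm, hj⟩)
      · have hbi : G.Reachable b i := (hmemCb i).1 hib
        constructor
        · rintro (h | ⟨h1, h2⟩ | ⟨h1, h2⟩)
          · exact Or.inr (hbi.trans h)
          · exact absurd (hbi.trans h1).symm hnr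
          · exact Or.inl h2
        · rintro (hj | hj)
          · exact Or.inr (Or.inr ⟨hbi.symm, hj⟩)
          · exact Or.inl (hbi.symm.trans hj)
    have hcompNot : ∀ i, i ∉ U → comp L' i = comp L i := by
      intro i hi
      rw [hU, Finset.mem_union, hmemCa, hmemCb] at hi
      push_neg at hi
      ext j
      simp only [mem_comp_iff, ← hG', ← hG, hreach']
      constructor
      · rintro (h | ⟨h1, -⟩ | ⟨h1, -⟩)
        · exact h
        · exact absurd h1.symm hi.1
        · exact absurd h1.symm hi.2
      · exact Or.inl
    have hcovered' : covered L' = insert a (insert b (covered L)) := by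
      ext j
      simp only [mem_covered_iff, Finset.mem_insert, hL']
      constructor
      · rintro ⟨f, hf | hf, hjf⟩
        · subst hf
          rcases Sym2.mem_iff.1 hjf with rfl | rfl
          · exact Or.inl rfl
          · exact Or.inr (Or.inl rfl)
        · exact Or.inr (Or.inr ⟨f, hf, hjf⟩)
      · rintro (h | h | ⟨f, hf, hjf⟩)
        · exact ⟨s(a, b), Or.inl rfl, by rw [h]; exact Sym2.mem_mk_left _ _⟩
        · exact ⟨s(a, b), Or.inl rfl, by rw [h]; exact Sym2.mem_mk_right _ _⟩
        · exact ⟨f, Or.inr hf, hjf⟩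
    have haU : a ∈ U := Finset.mem_union_left _ (comp_self L a)
    have hbU : b ∈ U := Finset.mem_union_right _ (comp_self L b)
    have haCov' : a ∈ covered L' := by
      rw [hcovered']; exact Finset.mem_insert_self _ _
    have hUsub : U ⊆ covered L' := by
      have := hcompU a haU
      rw [← this]
      exact comp_subset_covered haCov'
    have hCovSub : covered L ⊆ covered L' := by
      rw [hcovered']
      exact fun x hx => Finset.mem_insert_of_mem (Finset.mem_insert_of_mem hx)
    have hsdiff : covered L' \ U = covered L \ U := by
      ext j
      simp only [Finset.mem_sdiff, hcovered', Finset.mem_insert]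
      constructor
      · rintro ⟨rfl | rfl | hj, hnotU⟩
        · exact absurd haU hnotU
        · exact absurd hbU hnotU
        · exact ⟨hj, hnotU⟩
      · rintro ⟨hj, hnotU⟩
        exact ⟨Or.inr (Or.inr hj), hnotU⟩
    -- cardinalities
    have hUne : U.Nonempty := ⟨a, haU⟩
    have hCane : Ca.Nonempty := ⟨a, comp_self L a⟩
    have hCbne : Cb.Nonempty := ⟨b, comp_self L b⟩
    have hUcard : (U.card : ℝ) = (Ca.card : ℝ) + (Cb.card : ℝ) := by
      rw [hU, Finset.card_union_of_disjoint hdisj]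
      push_cast
      ring
    -- sums
    have hsumU : ∑ i ∈ U, ((2 : ℝ) - 2 / ((comp L' i).card : ℝ))
        = 2 * (U.card : ℝ) - 2 := sum_two_sub_const hUne _ hcompU
    have hsumCa : ∑ i ∈ covered L ∩ Ca, ((2 : ℝ) - 2 / ((comp L i).card : ℝ))
        = 2 * (Ca.card : ℝ) - 2 := by
      by_cases hac : a ∈ covered L
      · rw [Finset.inter_eq_right.2 (comp_subset_covered hac)]
        exact sum_two_sub_const hCane _
          (fun j hj => comp_eq_of_reach (mem_comp_iff.1 hj))
      · have hCa1 : Ca = {a} := uncovered_comp hac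
        have : covered L ∩ Ca = ∅ := by
          rw [hCa1]
          simp [Finset.eq_empty_iff_forall_notMem, hac]
        rw [this, hCa1]
        simp
    have hsumCb : ∑ i ∈ covered L ∩ Cb, ((2 : ℝ) - 2 / ((comp L i).card : ℝ))
        = 2 * (Cb.card : ℝ) - 2 := by
      by_cases hbc : b ∈ covered L
      · rw [Finset.inter_eq_right.2 (comp_subset_covered hbc)]
        exact sum_two_sub_const hCbne _
          (fun j hj => comp_eq_of_reach (mem_comp_iff.1 hj))
      · have hCb1 : Cb = {b} := uncovered_comp hbc
        have : covered L ∩ Cb = ∅ := by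
          rw [hCb1]
          simp [Finset.eq_empty_iff_forall_notMem, hbc]
        rw [this, hCb1]
        simp
    -- split the new sum
    have hnew : linkGame va L' =
        (∑ i ∈ covered L \ U, ((2 : ℝ) - 2 / ((comp L i).card : ℝ)))
          + (2 * (U.card : ℝ) - 2) := by
      rw [linkGame_va_eq, ← Finset.sum_sdiff hUsub, hsumU, hsdiff]
      congr 1
      refine Finset.sum_congr rfl (fun i hi => ?_)
      rw [hcompNot i (Finset.mem_sdiff.1 hi).2]
    -- split the old sum
    have hold : linkGame va L =
        (∑ i ∈ covered L \ U, ((2 : ℝ) - 2 / ((comp L i).card : ℝ)))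
          + ((2 * (Ca.card : ℝ) - 2) + (2 * (Cb.card : ℝ) - 2)) := by
      rw [linkGame_va_eq]
      have hsplit := Finset.sum_filter_add_sum_filter_not (covered L) (fun i => i ∈ U)
        (fun i => (2 : ℝ) - 2 / ((comp L i).card : ℝ))
      have h1 : (covered L).filter (fun i => i ∈ U) = covered L ∩ U :=
        (Finset.filter_mem_eq_inter)
      have h2 : (covered L).filter (fun i => i ∉ U) = covered L \ U := by
        rw [Finset.sdiff_eq_filter]
      have hinter : covered L ∩ U = (covered L ∩ Ca) ∪ (covered L ∩ Cb) := by
        rw [hU, Finset.inter_union_distrib_left]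
      have hdisj' : Disjoint (covered L ∩ Ca) (covered L ∩ Cb) :=
        hdisj.mono Finset.inter_subset_right Finset.inter_subset_right
      rw [← hsplit, h1, h2, hinter, Finset.sum_union hdisj', hsumCa, hsumCb]
      ring
    have hcard : (L'.card : ℝ) = (L.card : ℝ) + 1 := by
      rw [hL', Finset.card_insert_of_notMem he]
      push_cast
      ring
    have := ih hLE
    rw [hnew, hcard]
    rw [hold] at this
    rw [hUcard]
    linarith

/-- The Shapley value of a player whose marginal contributions are all equal to `c`. -/
lemma shapley_const {α : Type*} [DecidableEq α] (E : Finset α) (w : Finset α → ℝ) (e : α)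
    (he : e ∈ E) (c : ℝ)
    (hmarg : ∀ L ⊆ E.erase e, w (insert e L) - w L = c) :
    shapley E w e = c := by
  unfold shapley
  rw [Finset.sum_congr rfl
    (fun L hL => by rw [hmarg L (Finset.mem_powerset.1 hL)])]
  rw [← Finset.sum_mul]
  have hEcard : E.card = (E.erase e).card + 1 := by
    have h1 : (E.erase e).card = E.card - 1 := Finset.card_erase_of_mem he
    have h2 : 0 < E.card := Finset.card_pos.2 ⟨e, he⟩
    omega
  set s := (E.erase e).card with hs
  have hterm : ∀ j ∈ Finset.range (s + 1),
      ∑ T ∈ (E.erase e).powersetCard j,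
        ((T.card.factorial : ℝ) * ((E.card - T.card - 1).factorial : ℝ)
          / (E.card.factorial : ℝ))
        = (s.factorial : ℝ) / (((s + 1).factorial : ℝ)) := by
    intro j hj
    have hj' : j ≤ s := Nat.lt_succ_iff.1 (Finset.mem_range.1 hj)
    have hpt : ∀ T ∈ (E.erase e).powersetCard j,
        ((T.card.factorial : ℝ) * ((E.card - T.card - 1).factorial : ℝ)
          / (E.card.factorial : ℝ))
        = ((j.factorial : ℝ) * (((s - j).factorial : ℝ)) / (((s + 1).factorial : ℝ))) := by
      intro T hT
      obtain ⟨-, hTc⟩ := Finset.mem_powersetCard.1 hT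
      rw [hTc, hEcard]
      have hss : s + 1 - j - 1 = s - j := by omega
      rw [hss]
    rw [Finset.sum_congr rfl hpt, Finset.sum_const, Finset.card_powersetCard, nsmul_eq_mul]
    have hfac : (s.choose j) * (j.factorial * (s - j).factorial) = s.factorial := by
      rw [← Nat.choose_mul_factorial_mul_factorial hj']
      ring
    have hfacR : ((s.choose j : ℝ)) * ((j.factorial : ℝ) * ((s - j).factorial : ℝ))
        = (s.factorial : ℝ) := by exact_mod_cast congrArg Nat.cast hfac
    rw [mul_div_assoc, ← mul_assoc, ← mul_div_assoc, mul_assoc, hfacR]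
  rw [Finset.sum_powerset, ← hs, Finset.sum_congr rfl hterm, Finset.sum_const,
    Finset.card_range, nsmul_eq_mul]
  have hfne : ((s + 1).factorial : ℝ) ≠ 0 := by
    exact_mod_cast (Nat.factorial_pos (s + 1)).ne'
  have hone : ((s + 1 : ℕ) : ℝ) * ((s.factorial : ℝ) / (((s + 1).factorial : ℝ))) = 1 := by
    rw [Nat.factorial_succ]
    have hsf : (s.factorial : ℝ) ≠ 0 := by exact_mod_cast (Nat.factorial_pos s).ne'
    have hs1 : ((s : ℝ) + 1) ≠ 0 := by positivity
    push_cast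
    field_simp
  rw [hone, one_mul]

/-- on a cycle-free graph (forest), the position attachment centrality
of every node equals its degree. -/
theorem PA_forest_eq_degree (E : Finset (Sym2 V)) (hE : SimpleEdges E)
    (hacyc : (SimpleGraph.fromEdgeSet (↑E : Set (Sym2 V))).IsAcyclic) (i : V) :
    positionValue va E i = ((E.filter fun e => i ∈ e).card : ℝ) := by
  unfold positionValue
  have hshap : ∀ e ∈ E.filter (fun e => i ∈ e), shapley E (linkGame va) e = 2 := by
    intro e he
    have heE : e ∈ E := (Finset.mem_filter.1 he).1
    refine shapley_const E _ e heE 2 (fun L hL => ?_)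
    have hLE : L ⊆ E := hL.trans (Finset.erase_subset _ _)
    have heL : e ∉ L := fun h => (Finset.mem_erase.1 (hL h)).1 rfl
    have hins : insert e L ⊆ E := Finset.insert_subset heE hLE
    rw [linkGame_va_forest hE hacyc _ hins, linkGame_va_forest hE hacyc _ hLE,
      Finset.card_insert_of_notMem heL]
    push_cast
    ring
  rw [Finset.sum_congr rfl hshap, Finset.sum_const, nsmul_eq_mul]
  ring

end
end
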